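/- Let (S,𝓜) be a measurable space and let N_E be a lattice quasi-norm on measurable functions S → ℝ with quasi-triangle constant κ_E (i.e., N_E takes values in [0,∞], is absolutely homogeneous, satisfies the κ_E-quasi-triangle inequality, and N_E(h) ≤ N_E(h′) whenever |h| ≤ |h′| pointwise). Let X be a real vector space with quasi-norm ‖·‖_X, and suppose X is related to the lattice via a linear map J from X to measurable functions S → ℝ such that N_E(J x) = ‖x‖_X for all x ∈ X. Let Y be a real vector space with quasi-norm ‖·‖_Y of quasi-triangle constant κ_Y, let n ≥ 1, let f = (f_1,…,f_n) ∈ X^n and g = (g_1,…,g_n) ∈ Y^n, let 0 < c₁ ≤ c₂, and let A and B be reducing matrices (with constants c₁, c₂) for f with respect to ‖·‖_X and for g with respect to ‖·‖_Y, respectively. Then there are constants 0 < c ≤ C depending only on n, c₁, c₂, and the quasi-triangle constants such that c·‖A·B‖_op ≤ N_E( s ↦ ‖∑_{i=1}^n (J f_i)(s) • g_i‖_Y ) ≤ C·‖A·B‖_op. -/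

import Mathlib

open scoped TensorProduct

universe u v w

/-- The Euclidean norm on `Fin k → ℝ`. -/
noncomputable def euclNorm {k : ℕ} (x : Fin k → ℝ) : ℝ := Real.sqrt (∑ i, x i ^ 2)

/-- The operator norm of an `n × n` real matrix with respect to the Euclidean norm. -/
noncomputable def opNorm {n : ℕ} (M : Matrix (Fin n) (Fin n) ℝ) : ℝ :=
  ‖Matrix.toEuclideanCLM (𝕜 := ℝ) M‖

/-- A quasi-norm on a real vector space `Z` with quasi-triangle constant `κ`. -/
def IsQuasiNorm {Z : Type*} [AddCommGroup Z] [Module ℝ Z] (N : Z → ℝ) (κ : ℝ) : Prop :=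
  (∀ z, 0 ≤ N z) ∧ (∀ (l : ℝ) (z : Z), N (l • z) = |l| * N z) ∧
    ∀ z w, N (z + w) ≤ κ * (N z + N w)

/-- `A` is a reducing matrix for the tuple `f` with respect to `N` (with constants
`c₁ ≤ c₂`): `A` is positive semidefinite and `c₁|Ae| ≤ N(∑ eᵢ • fᵢ) ≤ c₂|Ae|`. -/
def IsReducing {X : Type*} [AddCommGroup X] [Module ℝ X] (N : X → ℝ)
    {n : ℕ} (f : Fin n → X) (c₁ c₂ : ℝ) (A : Matrix (Fin n) (Fin n) ℝ) : Prop :=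
  A.PosSemidef ∧ ∀ e : Fin n → ℝ,
    c₁ * euclNorm (A.mulVec e) ≤ N (∑ i, e i • f i) ∧
      N (∑ i, e i • f i) ≤ c₂ * euclNorm (A.mulVec e)

open MeasureTheory ENNReal

/-- A lattice quasi-norm (with quasi-triangle constant `κ`) on measurable real functions on
`S`, with values in `[0,∞]`: absolutely homogeneous, `κ`-quasi-subadditive, and monotone
under pointwise domination of absolute values. -/
def IsLatticeQuasiNorm {S : Type*} [MeasurableSpace S]
    (N : (S → ℝ) → ℝ≥0∞) (κ : ℝ) : Prop :=
  (∀ (l : ℝ) (h : S → ℝ), Measurable h →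
      N (fun s => l * h s) = ENNReal.ofReal |l| * N h) ∧
  (∀ h₁ h₂ : S → ℝ, Measurable h₁ → Measurable h₂ →
      N (fun s => h₁ s + h₂ s) ≤ ENNReal.ofReal κ * (N h₁ + N h₂)) ∧
  (∀ h h' : S → ℝ, (∀ s, |h s| ≤ |h' s|) → N h ≤ N h')

lemma euclNorm_eq_norm {k : ℕ} (x : Fin k → ℝ) :
    euclNorm x = ‖(WithLp.equiv 2 (Fin k → ℝ)).symm x‖ := by
  rw [EuclideanSpace.norm_eq]
  simp [euclNorm, Real.norm_eq_abs, sq_abs]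

lemma euclNorm_nonneg {k : ℕ} (x : Fin k → ℝ) : 0 ≤ euclNorm x := Real.sqrt_nonneg _

lemma euclNorm_smul {k : ℕ} (c : ℝ) (x : Fin k → ℝ) :
    euclNorm (c • x) = |c| * euclNorm x := by
  simp only [euclNorm, Pi.smul_apply, smul_eq_mul, mul_pow]
  rw [← Finset.mul_sum, Real.sqrt_mul (sq_nonneg c), Real.sqrt_sq_eq_abs]

lemma euclNorm_pos {k : ℕ} {x : Fin k → ℝ} (hx : x ≠ 0) : 0 < euclNorm x := by
  rw [euclNorm_eq_norm, norm_pos_iff]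
  simpa using hx

lemma euclNorm_mulVec_le {n : ℕ} (M : Matrix (Fin n) (Fin n) ℝ) (x : Fin n → ℝ) :
    euclNorm (M.mulVec x) ≤ opNorm M * euclNorm x := by
  rw [euclNorm_eq_norm, euclNorm_eq_norm, WithLp.equiv_symm_apply, ← Matrix.toEuclideanCLM_toLp]
  exact (Matrix.toEuclideanCLM (𝕜 := ℝ) M).le_opNorm _

lemma opNorm_le_bound' {n : ℕ} (M : Matrix (Fin n) (Fin n) ℝ) {t : ℝ} (ht : 0 ≤ t)
    (h : ∀ x : Fin n → ℝ, euclNorm (M.mulVec x) ≤ t * euclNorm x) : opNorm M ≤ t := by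
  refine ContinuousLinearMap.opNorm_le_bound _ ht fun x => ?_
  have h2 := h (WithLp.equiv 2 (Fin n → ℝ) x)
  rw [euclNorm_eq_norm, euclNorm_eq_norm] at h2
  have h3 : (Matrix.toEuclideanCLM (𝕜 := ℝ) M) x =
      (WithLp.equiv 2 (Fin n → ℝ)).symm (M.mulVec (WithLp.equiv 2 (Fin n → ℝ) x)) := by
    rw [WithLp.equiv_symm_apply, ← Matrix.toEuclideanCLM_toLp]; simp
  rw [h3]
  simpa using h2

lemma abs_dot_le {k : ℕ} (x y : Fin k → ℝ) :
    |∑ i, x i * y i| ≤ euclNorm x * euclNorm y := by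
  have h := abs_real_inner_le_norm ((WithLp.equiv 2 (Fin k → ℝ)).symm x)
    ((WithLp.equiv 2 (Fin k → ℝ)).symm y)
  rw [euclNorm_eq_norm, euclNorm_eq_norm]
  simpa [PiLp.inner_apply, RCLike.inner_apply, mul_comm] using h

lemma euclNorm_le_sum_abs {k : ℕ} (x : Fin k → ℝ) : euclNorm x ≤ ∑ i, |x i| := by
  have h1 : ∑ i, x i ^ 2 ≤ (∑ i, |x i|) ^ 2 := by
    have := Finset.sum_sq_le_sq_sum_of_nonneg (s := Finset.univ)
      (f := fun i => |x i|) (fun i _ => abs_nonneg _)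
    simpa [sq_abs] using this
  calc euclNorm x ≤ Real.sqrt ((∑ i, |x i|) ^ 2) := Real.sqrt_le_sqrt h1
    _ = ∑ i, |x i| := Real.sqrt_sq (Finset.sum_nonneg fun i _ => abs_nonneg _)

lemma euclNorm_single {n : ℕ} (i : Fin n) : euclNorm (Pi.single i (1:ℝ)) = 1 := by
  simp [euclNorm, Pi.single_apply, Finset.sum_ite_eq']
lemma NE_zero {S : Type*} [MeasurableSpace S] {NE : (S → ℝ) → ℝ≥0∞} {κ : ℝ}
    (hNE : IsLatticeQuasiNorm NE κ) : NE (fun _ => 0) = 0 := by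
  have h := hNE.1 0 (fun _ => 0) measurable_const
  simpa using h

lemma NE_sum_le {S : Type*} [MeasurableSpace S] {NE : (S → ℝ) → ℝ≥0∞} {κ : ℝ}
    (hNE : IsLatticeQuasiNorm NE κ) (hκ : 1 ≤ κ) :
    ∀ (m : ℕ) (h : Fin m → S → ℝ), (∀ i, Measurable (h i)) →
      NE (fun s => ∑ i, h i s) ≤ ENNReal.ofReal (κ ^ m) * ∑ i, NE (h i) := by
  intro m
  induction m with
  | zero =>
    intro h _
    simp [NE_zero hNE]
  | succ m ih =>
    intro h hm
    have hκm : (1 : ℝ≥0∞) ≤ ENNReal.ofReal (κ ^ m) := by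
      rw [ENNReal.one_le_ofReal]; exact one_le_pow₀ hκ
    calc NE (fun s => ∑ i, h i s)
        = NE (fun s => h 0 s + ∑ i : Fin m, h i.succ s) := by
          simp only [Fin.sum_univ_succ]
      _ ≤ ENNReal.ofReal κ * (NE (h 0) + NE (fun s => ∑ i : Fin m, h i.succ s)) :=
          hNE.2.1 _ _ (hm 0) (by
            exact Finset.measurable_sum _ fun i _ => hm i.succ)
      _ ≤ ENNReal.ofReal κ * (NE (h 0) + ENNReal.ofReal (κ ^ m) * ∑ i : Fin m, NE (h i.succ)) := by
          gcongr
          exact ih _ (fun i => hm i.succ)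
      _ ≤ ENNReal.ofReal κ * (ENNReal.ofReal (κ ^ m) * (NE (h 0) + ∑ i : Fin m, NE (h i.succ))) := by
          gcongr
          rw [mul_add]
          gcongr
          exact le_mul_of_one_le_left (by positivity) hκm
      _ = ENNReal.ofReal (κ ^ (m + 1)) * ∑ i, NE (h i) := by
          rw [Fin.sum_univ_succ, ← mul_assoc, ← ENNReal.ofReal_mul (by linarith), ← pow_succ']
/-- **`‖A·B‖_op` is comparable to `N_E(s ↦ ‖∑ (J fᵢ)(s) • gᵢ‖_Y)`** (Corollary 3.6), when
`X` is related to a quasi-normed function lattice `E` via an isometric linear map `J`. -/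
theorem stmt13 (n : ℕ) (hn : 1 ≤ n) (c₁ c₂ κE κX κY : ℝ) (hc₁ : 0 < c₁) (hc₁₂ : c₁ ≤ c₂)
    (hκE : 1 ≤ κE) (hκX : 1 ≤ κX) (hκY : 1 ≤ κY) :
    ∃ c C : ℝ, 0 < c ∧ c ≤ C ∧
      ∀ (S : Type u) [MeasurableSpace S] (NE : (S → ℝ) → ℝ≥0∞),
        IsLatticeQuasiNorm NE κE →
        ∀ (X : Type v) [AddCommGroup X] [Module ℝ X] (NX : X → ℝ), IsQuasiNorm NX κX →
        ∀ J : X →ₗ[ℝ] S → ℝ, (∀ x, Measurable (J x)) →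
          (∀ x, NE (J x) = ENNReal.ofReal (NX x)) →
        ∀ (Y : Type w) [AddCommGroup Y] [Module ℝ Y] (NY : Y → ℝ), IsQuasiNorm NY κY →
        ∀ (f : Fin n → X) (g : Fin n → Y) (A B : Matrix (Fin n) (Fin n) ℝ),
          IsReducing NX f c₁ c₂ A → IsReducing NY g c₁ c₂ B →
          ENNReal.ofReal (c * opNorm (A * B)) ≤
              NE (fun s => NY (∑ i, J (f i) s • g i)) ∧
            NE (fun s => NY (∑ i, J (f i) s • g i)) ≤
              ENNReal.ofReal (C * opNorm (A * B)) := by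
  have hc₂ : 0 < c₂ := lt_of_lt_of_le hc₁ hc₁₂
  have hκEn : (1:ℝ) ≤ κE ^ n := one_le_pow₀ hκE
  have hn' : (1:ℝ) ≤ (n:ℝ) := by exact_mod_cast hn
  refine ⟨c₁^2, (n : ℝ) * κE^n * c₂^2, by positivity, ?_, ?_⟩
  · have h1 : c₁^2 ≤ c₂^2 := by nlinarith
    have h2 : (1:ℝ) ≤ (n:ℝ) * κE^n := by nlinarith
    nlinarith [sq_nonneg c₂]
  intro S _ NE hNE X _ _ NX hNX J hJmeas hJ Y _ _ NY hNY f g A B hA hB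
  have hBsym : ∀ i j, B i j = B j i := fun i j => (hB.1.1.apply i j).symm.trans (star_trivial _)
  have hJsum : ∀ (e : Fin n → ℝ) (s : S), J (∑ i, e i • f i) s = ∑ i, e i * J (f i) s := by
    intro e s
    rw [map_sum, Finset.sum_apply]
    simp [_root_.map_smul]
  have hFnonneg : ∀ s, 0 ≤ NY (∑ i, J (f i) s • g i) := fun s => hNY.1 _
  -- the tuple x_i = ∑_j B i j • f_j
  set xmat : Fin n → X := fun i => ∑ j, B i j • f j with hxmat
  -- upper bound
  have hupper : NE (fun s => NY (∑ i, J (f i) s • g i)) ≤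
      ENNReal.ofReal ((n : ℝ) * κE^n * c₂^2 * opNorm (A * B)) := by
    have key : ∀ s, NY (∑ i, J (f i) s • g i) ≤ ∑ i, c₂ * |J (xmat i) s| := by
      intro s
      have hred := (hB.2 (fun i => J (f i) s)).2
      have h2 : euclNorm (B.mulVec (fun i => J (f i) s)) ≤ ∑ i, |J (xmat i) s| := by
        refine (euclNorm_le_sum_abs _).trans_eq ?_
        refine Finset.sum_congr rfl fun i _ => ?_
        congr 1
        rw [hxmat, hJsum]
        simp [Matrix.mulVec, dotProduct]
      calc NY (∑ i, J (f i) s • g i) ≤ c₂ * euclNorm (B.mulVec (fun i => J (f i) s)) := hred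
        _ ≤ c₂ * ∑ i, |J (xmat i) s| := mul_le_mul_of_nonneg_left h2 hc₂.le
        _ = ∑ i, c₂ * |J (xmat i) s| := Finset.mul_sum _ _ _
    have step1 : NE (fun s => NY (∑ i, J (f i) s • g i)) ≤
        NE (fun s => ∑ i, c₂ * |J (xmat i) s|) := by
      refine hNE.2.2 _ _ fun s => ?_
      rw [abs_of_nonneg (hFnonneg s), abs_of_nonneg (Finset.sum_nonneg fun i _ => by positivity)]
      exact key s
    have step2 : NE (fun s => ∑ i, c₂ * |J (xmat i) s|) ≤
        ENNReal.ofReal (κE^n) * ∑ i, NE (fun s => c₂ * |J (xmat i) s|) :=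
      NE_sum_le hNE hκE n _ fun i => ((hJmeas _).abs).const_mul c₂
    have step3 : ∀ i, NE (fun s => c₂ * |J (xmat i) s|) ≤
        ENNReal.ofReal (c₂ * (c₂ * opNorm (A * B))) := by
      intro i
      have habs : NE (fun s => |J (xmat i) s|) ≤ NE (J (xmat i)) :=
        hNE.2.2 _ _ fun s => by simp
      rw [hNE.1 c₂ _ (hJmeas _).abs, abs_of_nonneg hc₂.le]
      calc ENNReal.ofReal c₂ * NE (fun s => |J (xmat i) s|)
          ≤ ENNReal.ofReal c₂ * NE (J (xmat i)) := by gcongr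
        _ = ENNReal.ofReal c₂ * ENNReal.ofReal (NX (xmat i)) := by rw [hJ]
        _ ≤ ENNReal.ofReal c₂ * ENNReal.ofReal (c₂ * opNorm (A * B)) := by
            gcongr
            have hvec : A.mulVec (fun j => B i j) = (A * B).mulVec (Pi.single i 1) := by
              rw [Matrix.mulVec_single_one]
              funext k
              simp only [Matrix.mulVec, dotProduct, Matrix.transpose_apply,
                Matrix.mul_apply]
              exact Finset.sum_congr rfl fun j _ => by rw [hBsym i j]
            calc NX (xmat i) ≤ c₂ * euclNorm (A.mulVec (fun j => B i j)) := (hA.2 _).2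
              _ = c₂ * euclNorm ((A * B).mulVec (Pi.single i 1)) := by rw [hvec]
              _ ≤ c₂ * (opNorm (A * B) * euclNorm (Pi.single i 1)) :=
                  mul_le_mul_of_nonneg_left (euclNorm_mulVec_le _ _) hc₂.le
              _ = c₂ * opNorm (A * B) := by rw [euclNorm_single, mul_one]
        _ = ENNReal.ofReal (c₂ * (c₂ * opNorm (A * B))) := (ENNReal.ofReal_mul hc₂.le).symm
    have hopnn : 0 ≤ opNorm (A * B) := norm_nonneg _
    calc NE (fun s => NY (∑ i, J (f i) s • g i))
        ≤ ENNReal.ofReal (κE^n) * ∑ i, NE (fun s => c₂ * |J (xmat i) s|) := step1.trans step2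
      _ ≤ ENNReal.ofReal (κE^n) * ∑ _i : Fin n,
            ENNReal.ofReal (c₂ * (c₂ * opNorm (A * B))) := by
          gcongr with i
          exact step3 i
      _ = ENNReal.ofReal (κE^n) * ((n : ℝ≥0∞) * ENNReal.ofReal (c₂ * (c₂ * opNorm (A * B)))) := by
          rw [Finset.sum_const, Finset.card_univ, Fintype.card_fin, nsmul_eq_mul]
      _ = ENNReal.ofReal ((n : ℝ) * κE^n * c₂^2 * opNorm (A * B)) := by
          rw [← ENNReal.ofReal_natCast n, ← ENNReal.ofReal_mul (by positivity),
            ← ENNReal.ofReal_mul (by positivity)]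
          congr 1
          ring
  refine ⟨?_, hupper⟩
  -- lower bound
  by_cases htop : NE (fun s => NY (∑ i, J (f i) s • g i)) = ⊤
  · rw [htop]; exact le_top
  have key : ∀ w : Fin n → ℝ, euclNorm w ≤ 1 →
      ENNReal.ofReal (c₁^2 * euclNorm ((A * B).mulVec w)) ≤
        NE (fun s => NY (∑ i, J (f i) s • g i)) := by
    intro w hw
    set xw : X := ∑ i, B.mulVec w i • f i with hxw
    have hpt : ∀ s, |c₁ * J xw s| ≤ |NY (∑ i, J (f i) s • g i)| := by
      intro s
      have h1 : J xw s = ∑ i, B.mulVec w i * J (f i) s := hJsum _ s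
      have h2 : ∑ i, B.mulVec w i * J (f i) s =
          ∑ j, w j * B.mulVec (fun i => J (f i) s) j := by
        simp only [Matrix.mulVec, dotProduct]
        calc ∑ i, (∑ j, B i j * w j) * J (f i) s
            = ∑ i, ∑ j, B i j * w j * J (f i) s := by simp [Finset.sum_mul]
          _ = ∑ j, ∑ i, B i j * w j * J (f i) s := Finset.sum_comm
          _ = ∑ j, w j * ∑ i, B j i * J (f i) s := by
              refine Finset.sum_congr rfl fun j _ => ?_
              rw [Finset.mul_sum]
              refine Finset.sum_congr rfl fun i _ => ?_
              rw [hBsym i j]; ring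
      have h3 := abs_dot_le w (B.mulVec (fun i => J (f i) s))
      have h4 : c₁ * euclNorm (B.mulVec (fun i => J (f i) s)) ≤
          NY (∑ i, J (f i) s • g i) := (hB.2 _).1
      have hBn : 0 ≤ euclNorm (B.mulVec (fun i => J (f i) s)) := euclNorm_nonneg _
      rw [abs_mul, abs_of_nonneg hc₁.le, h1, h2, abs_of_nonneg (hFnonneg s)]
      calc c₁ * |∑ j, w j * B.mulVec (fun i => J (f i) s) j|
          ≤ c₁ * (euclNorm w * euclNorm (B.mulVec (fun i => J (f i) s))) :=
            mul_le_mul_of_nonneg_left h3 hc₁.le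
        _ ≤ c₁ * euclNorm (B.mulVec (fun i => J (f i) s)) :=
            mul_le_mul_of_nonneg_left (mul_le_of_le_one_left hBn hw) hc₁.le
        _ ≤ NY (∑ i, J (f i) s • g i) := h4
    calc ENNReal.ofReal (c₁^2 * euclNorm ((A * B).mulVec w))
        = ENNReal.ofReal c₁ * ENNReal.ofReal (c₁ * euclNorm (A.mulVec (B.mulVec w))) := by
          rw [Matrix.mulVec_mulVec, ← ENNReal.ofReal_mul hc₁.le, ← mul_assoc, sq]
      _ ≤ ENNReal.ofReal c₁ * ENNReal.ofReal (NX xw) := by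
          gcongr
          exact (hA.2 _).1
      _ = ENNReal.ofReal c₁ * NE (J xw) := by rw [hJ]
      _ = NE (fun s => c₁ * J xw s) := by
          rw [hNE.1 c₁ _ (hJmeas _), abs_of_nonneg hc₁.le]
      _ ≤ NE (fun s => NY (∑ i, J (f i) s • g i)) := hNE.2.2 _ _ hpt
  set t := (NE (fun s => NY (∑ i, J (f i) s • g i))).toReal with ht
  have key' : ∀ w : Fin n → ℝ, euclNorm w ≤ 1 →
      c₁^2 * euclNorm ((A * B).mulVec w) ≤ t := by
    intro w hw
    have h2 := ENNReal.toReal_mono htop (key w hw)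
    rwa [ENNReal.toReal_ofReal (mul_nonneg (by positivity) (euclNorm_nonneg _))] at h2
  have hop : opNorm (A * B) ≤ t / c₁^2 := by
    refine opNorm_le_bound' _ (div_nonneg ENNReal.toReal_nonneg (by positivity)) fun x => ?_
    rcases eq_or_ne x 0 with rfl | hx
    · simp [Matrix.mulVec_zero, euclNorm]
    · have hx' : 0 < euclNorm x := euclNorm_pos hx
      have hw : euclNorm ((euclNorm x)⁻¹ • x) = 1 := by
        rw [euclNorm_smul, abs_of_nonneg (inv_nonneg.mpr hx'.le), inv_mul_cancel₀ hx'.ne']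
      have h1 := key' _ hw.le
      rw [Matrix.mulVec_smul, euclNorm_smul, abs_of_nonneg (inv_nonneg.mpr hx'.le)] at h1
      rw [div_mul_eq_mul_div, le_div_iff₀ (by positivity)]
      calc euclNorm ((A * B).mulVec x) * c₁^2
          = euclNorm x * (c₁^2 * ((euclNorm x)⁻¹ * euclNorm ((A * B).mulVec x))) := by
            field_simp
        _ ≤ euclNorm x * t := mul_le_mul_of_nonneg_left h1 hx'.le
        _ = t * euclNorm x := mul_comm _ _
  have hfinal : c₁^2 * opNorm (A * B) ≤ t := by
    have h1 : c₁^2 * opNorm (A * B) ≤ c₁^2 * (t / c₁^2) :=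
      mul_le_mul_of_nonneg_left hop (by positivity)
    rwa [mul_div_cancel₀ _ (by positivity : (c₁:ℝ)^2 ≠ 0)] at h1
  calc ENNReal.ofReal (c₁^2 * opNorm (A * B)) ≤ ENNReal.ofReal t :=
        ENNReal.ofReal_le_ofReal hfinal
    _ = NE (fun s => NY (∑ i, J (f i) s • g i)) := ENNReal.ofReal_toReal htop
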